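/- arXiv:math/0411186 — 2 statements merged into one kernel-verified Lean document; each statement's English description precedes it below -/
import Mathlib

section
/- Let u : G → ℂ and let (φ_i)_{i∈ℕ}, (ψ_i)_{i∈ℕ} be sequences of measurable functions G → ℂ for which there exists C > 0 with Σ_i |φ_i(x)|² ≤ C and Σ_i |ψ_i(x)|² ≤ C for every x ∈ G, and such that u(x·y⁻¹) = Σ_i φ_i(x)·ψ_i(y) for all x, y ∈ G. Then for every s ∈ G and every f ∈ L²(G,μ), the series Σ_i φ_i · (λ(s)(ψ_i · f)) converges in L²(G,μ) and its sum equals u(s) · λ(s)f. (This says that the operator Σ_i M_{φ_i} λ(s) M_{ψ_i}, with the sum converging strongly, equals u(s)·λ(s).) -/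
/-!
Substituting `x = t`, `y = s⁻¹t` in the kernel identity gives, for every `t`,
`u(s) = Σ_i φ_i(t) ψ_i(s⁻¹t)`, and by AM-GM every partial sum of `Σ_i |φ_i(t) ψ_i(s⁻¹t)|`
is at most `C`. Hence the partial sums of `Σ_i φ_i · λ(s)(ψ_i · f)` converge pointwise to
`u(s) · λ(s)f` and are dominated by `C |λ(s)f| ∈ L²`, so dominated convergence gives
convergence in `L²`.
-/

open MeasureTheory Filter Topology
open scoped ENNReal

theorem sum_norm_mul_le_of_summable_sq {ι 𝕜 : Type*} [NormedRing 𝕜] {x y : ι → 𝕜}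
    (hx : Summable fun i => ‖x i‖ ^ 2) (hy : Summable fun i => ‖y i‖ ^ 2) (s : Finset ι) :
    ∑ i ∈ s, ‖x i * y i‖ ≤ ((∑' i, ‖x i‖ ^ 2) + ∑' i, ‖y i‖ ^ 2) / 2 :=
  calc ∑ i ∈ s, ‖x i * y i‖
      ≤ ∑ i ∈ s, (‖x i‖ ^ 2 + ‖y i‖ ^ 2) / 2 := by
        refine Finset.sum_le_sum fun i _ => (norm_mul_le _ _).trans ?_
        linarith [two_mul_le_add_sq ‖x i‖ ‖y i‖]
    _ = ((∑ i ∈ s, ‖x i‖ ^ 2) + ∑ i ∈ s, ‖y i‖ ^ 2) / 2 := by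
        rw [← Finset.sum_add_distrib, Finset.sum_div]
    _ ≤ ((∑' i, ‖x i‖ ^ 2) + ∑' i, ‖y i‖ ^ 2) / 2 := by
        gcongr
        · exact hx.sum_le_tsum s fun i _ => by positivity
        · exact hy.sum_le_tsum s fun i _ => by positivity

namespace MeasureTheory

variable {α E : Type*} [MeasurableSpace α] {μ : Measure α} [NormedAddCommGroup E] {p : ℝ≥0∞}

theorem MemLp.toLp_finsetSum {ι : Type*} (s : Finset ι) {g : ι → α → E}
    (hg : ∀ i, MemLp (g i) p μ) :
    ∑ i ∈ s, (hg i).toLp (g i) = (memLp_finsetSum' s fun i _ => hg i).toLp (∑ i ∈ s, g i) := by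
  classical
  induction s using Finset.induction with
  | empty => simp
  | insert i s hi ih => simp [Finset.sum_insert hi, ih, ← MemLp.toLp_add]

theorem tendsto_eLpNorm_sub_of_dominated {ι : Type*} {l : Filter ι} [l.IsCountablyGenerated]
    (hp0 : p ≠ 0) (hp : p ≠ ∞) {F : ι → α → E} {f : α → E} {bound : α → ℝ}
    (hF : ∀ᶠ n in l, AEStronglyMeasurable (F n) μ) (hf : AEStronglyMeasurable f μ)
    (hbound : MemLp bound p μ) (h_le : ∀ᶠ n in l, ∀ᵐ a ∂μ, ‖F n a - f a‖ ≤ bound a)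
    (h_lim : ∀ᵐ a ∂μ, Tendsto (fun n => F n a) l (𝓝 (f a))) :
    Tendsto (fun n => eLpNorm (F n - f) p μ) l (𝓝 0) := by
  have hp_pos : 0 < p.toReal := ENNReal.toReal_pos hp0 hp
  have h_int : Tendsto (fun n => ∫⁻ a, ‖F n a - f a‖ₑ ^ p.toReal ∂μ) l (𝓝 0) := by
    simpa using tendsto_lintegral_filter_of_dominated_convergence' (f := fun _ => 0)
      (fun a => ‖bound a‖ₑ ^ p.toReal)
      (by filter_upwards [hF] with n hn using (hn.sub hf).enorm.pow_const _)
      (by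
        filter_upwards [h_le] with n hn
        filter_upwards [hn] with a ha
        gcongr
        exact enorm_le_iff_norm_le.mpr (ha.trans (Real.le_norm_self _)))
      (lintegral_rpow_enorm_lt_top_of_eLpNorm_lt_top hp0 hp hbound.2).ne
      (by
        filter_upwards [h_lim] with a ha
        have h_sub : Tendsto (fun n => F n a - f a) l (𝓝 0) := by
          simpa using ha.sub_const (f a)
        have := (((ENNReal.continuous_rpow_const (y := p.toReal)).comp
          continuous_enorm).tendsto (0 : E)).comp h_sub
        simpa [Function.comp_def, ENNReal.zero_rpow_of_pos hp_pos] using this)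
  have := ((ENNReal.continuous_rpow_const (y := 1 / p.toReal)).tendsto 0).comp h_int
  rw [ENNReal.zero_rpow_of_pos (by positivity)] at this
  refine this.congr fun n => ?_
  rw [eLpNorm_eq_lintegral_rpow_enorm_toReal hp0 hp]
  rfl

theorem hasSum_toLp_of_dominated {ι : Type*} [Countable ι] [Fact (1 ≤ p)] (hp : p ≠ ∞)
    {g : ι → α → E} {h : α → E} (hg : ∀ i, MemLp (g i) p μ) (hh : MemLp h p μ)
    {bound : α → ℝ} (hbound : MemLp bound p μ)
    (h_le : ∀ᵐ a ∂μ, ∀ s : Finset ι, ‖∑ i ∈ s, g i a‖ ≤ bound a)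
    (h_sum : ∀ᵐ a ∂μ, HasSum (fun i => g i a) (h a)) :
    HasSum (fun i => (hg i).toLp (g i)) (hh.toLp h) := by
  have hp0 : p ≠ 0 := (zero_lt_one.trans_le Fact.out).ne'
  change Tendsto (fun s : Finset ι => ∑ i ∈ s, (hg i).toLp (g i)) atTop _
  simp_rw [MemLp.toLp_finsetSum]
  rw [Lp.tendsto_Lp_iff_tendsto_eLpNorm'']
  refine tendsto_eLpNorm_sub_of_dominated hp0 hp
    (Eventually.of_forall fun s => (memLp_finsetSum' s fun i _ => hg i).1) hh.1
    (hbound.add hh.norm) (Eventually.of_forall fun s => ?_) ?_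
  · filter_upwards [h_le] with a ha
    simpa only [Finset.sum_apply, Pi.add_apply] using
      (norm_sub_le _ _).trans (add_le_add_left (ha s) _)
  · filter_upwards [h_sum] with a ha
    simp only [Finset.sum_apply]
    exact ha

variable {𝕜 : Type*} [NormedRing 𝕜]

theorem memLp_mul_mul {a b F : α → 𝕜} (ha : AEStronglyMeasurable a μ)
    (hb : AEStronglyMeasurable b μ) (hF : MemLp F p μ) {C : ℝ} (h_le : ∀ x, ‖a x * b x‖ ≤ C) :
    MemLp (fun x => a x * (b x * F x)) p μ :=
  hF.of_le_mul (ha.mul (hb.mul hF.1)) <| ae_of_all _ fun x => by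
    rw [← mul_assoc]
    exact (norm_mul_le _ _).trans (by gcongr; exact h_le x)

theorem hasSum_toLp_mul_mul {ι : Type*} [Countable ι] [Fact (1 ≤ p)] (hp : p ≠ ∞)
    {a b : ι → α → 𝕜} {F : α → 𝕜} (hg : ∀ i, MemLp (fun x => a i x * (b i x * F x)) p μ)
    (hF : MemLp F p μ) {c : 𝕜} {C : ℝ} (h_sum : ∀ x, HasSum (fun i => a i x * b i x) c)
    (h_le : ∀ x (s : Finset ι), ∑ i ∈ s, ‖a i x * b i x‖ ≤ C) :
    HasSum (fun i => (hg i).toLp _) ((hF.const_mul c).toLp _) := by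
  refine hasSum_toLp_of_dominated hp hg _ (hF.norm.const_mul C) (ae_of_all _ fun x s => ?_)
    (ae_of_all _ fun x => by simpa only [mul_assoc] using (h_sum x).mul_right (F x))
  calc ‖∑ i ∈ s, a i x * (b i x * F x)‖
      ≤ ∑ i ∈ s, ‖a i x * b i x‖ * ‖F x‖ := by
        refine (norm_sum_le _ _).trans (Finset.sum_le_sum fun i _ => ?_)
        rw [← mul_assoc]
        exact norm_mul_le _ _
    _ ≤ C * ‖F x‖ := by
        rw [← Finset.sum_mul]
        gcongr
        exact h_le x s

end MeasureTheory

theorem stmt1_general {G : Type*} [Group G] [TopologicalSpace G] [IsTopologicalGroup G]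
    [MeasurableSpace G] [BorelSpace G]
    (μ : Measure G) [μ.IsHaarMeasure]
    (u : G → ℂ) (φ ψ : ℕ → G → ℂ)
    (hφm : ∀ i, Measurable (φ i)) (hψm : ∀ i, Measurable (ψ i))
    (C : ℝ)
    (hφsum : ∀ x, Summable fun i => ‖φ i x‖ ^ 2)
    (hψsum : ∀ x, Summable fun i => ‖ψ i x‖ ^ 2)
    (hφb : ∀ x, (∑' i, ‖φ i x‖ ^ 2) ≤ C) (hψb : ∀ x, (∑' i, ‖ψ i x‖ ^ 2) ≤ C)
    (hu : ∀ x y : G, u (x * y⁻¹) = ∑' i, φ i x * ψ i y)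
    (s : G) (f : Lp ℂ 2 μ) :
    ∃ (hg : ∀ i, MemLp (fun t => φ i t * (ψ i (s⁻¹ * t) * f (s⁻¹ * t))) 2 μ)
      (hh : MemLp (fun t => u s * f (s⁻¹ * t)) 2 μ),
      HasSum (fun i => (hg i).toLp _) (hh.toLp _) := by
  have hF : MemLp (fun t => f (s⁻¹ * t)) 2 μ :=
    (Lp.memLp f).comp_measurePreserving (measurePreserving_mul_left μ s⁻¹)
  have h_le (t : G) (N : Finset ℕ) : ∑ i ∈ N, ‖φ i t * ψ i (s⁻¹ * t)‖ ≤ C :=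
    (sum_norm_mul_le_of_summable_sq (hφsum t) (hψsum _) N).trans
      (by linarith [hφb t, hψb (s⁻¹ * t)])
  have h_sum (t : G) : HasSum (fun i => φ i t * ψ i (s⁻¹ * t)) (u s) := by
    have := (summable_of_sum_le (fun _ => norm_nonneg _) (h_le t)).of_norm.hasSum
    rwa [← hu, mul_inv_rev, inv_inv, mul_inv_cancel_left] at this
  have hg (i : ℕ) := memLp_mul_mul (hφm i).aestronglyMeasurable
    ((hψm i).comp (measurable_const_mul s⁻¹)).aestronglyMeasurable hF
    fun t => by simpa using h_le t {i}
  exact ⟨hg, hF.const_mul (u s), hasSum_toLp_mul_mul ENNReal.ofNat_ne_top hg hF h_sum h_le⟩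

/-- If `u(x·y⁻¹) = Σ_i φ_i(x)ψ_i(y)` for measurable sequences with
`Σ_i |φ_i(x)|² ≤ C` and `Σ_i |ψ_i(x)|² ≤ C` everywhere, then for every `s ∈ G` and
`f ∈ L²(G,μ)` the series `Σ_i φ_i · (λ(s)(ψ_i · f))` converges in `L²(G,μ)` to
`u(s) · λ(s)f`, i.e. `Σ_i M_{φ_i} λ(s) M_{ψ_i} = u(s)·λ(s)` with strong convergence. -/
theorem stmt1 {G : Type*} [Group G] [TopologicalSpace G] [IsTopologicalGroup G]
    [LocallyCompactSpace G] [T2Space G] [MeasurableSpace G] [BorelSpace G]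
    (μ : Measure G) [μ.IsHaarMeasure] [μ.Regular]
    (u : G → ℂ) (φ ψ : ℕ → G → ℂ)
    (hφm : ∀ i, Measurable (φ i)) (hψm : ∀ i, Measurable (ψ i))
    (C : ℝ) (hC : 0 < C)
    (hφsum : ∀ x, Summable fun i => ‖φ i x‖ ^ 2)
    (hψsum : ∀ x, Summable fun i => ‖ψ i x‖ ^ 2)
    (hφb : ∀ x, (∑' i, ‖φ i x‖ ^ 2) ≤ C) (hψb : ∀ x, (∑' i, ‖ψ i x‖ ^ 2) ≤ C)
    (hu : ∀ x y : G, u (x * y⁻¹) = ∑' i, φ i x * ψ i y)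
    (s : G) (f : Lp ℂ 2 μ) :
    ∃ (hg : ∀ i, MemLp (fun t => φ i t * (ψ i (s⁻¹ * t) * f (s⁻¹ * t))) 2 μ)
      (hh : MemLp (fun t => u s * f (s⁻¹ * t)) 2 μ),
      HasSum (fun i => (hg i).toLp _) (hh.toLp _) :=
  stmt1_general μ u φ ψ hφm hψm C hφsum hψsum hφb hψb hu s f
end

section
/- Let (Ω,μ) be a measure space, C > 0, and let (φ_i)_{i∈ℕ}, (ψ_i)_{i∈ℕ} be sequences of measurable functions Ω → ℂ such that Σ_i |φ_i(x)|² ≤ C and Σ_i |ψ_i(x)|² ≤ C for μ-almost every x ∈ Ω. Let (S_k)_{k∈ℕ} be a sequence of bounded linear operators on L²(Ω,μ) with sup_k ‖S_k‖ < ∞ which converges to 0 in the weak operator topology, i.e. ⟪S_k h, h'⟫ → 0 for all h, h' ∈ L²(Ω,μ). Then for all f, g ∈ L²(Ω,μ): Σ_i ⟪S_k(ψ_i·f), φ̄_i·g⟫ → 0 as k → ∞, where φ̄_i denotes the pointwise complex conjugate of φ_i. -/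
/-!
The families `u i = ψ_i f` and `v i = φ̄_i g` are square-summable in `L²`, since
`∑ ‖ψ_i f‖² = ∫ (∑ |ψ_i|²) |f|² ≤ C ‖f‖²`. By Cauchy–Schwarz, `|⟪S_k u_i, v_i⟫| ≤ B ‖u_i‖ ‖v_i‖`,
a summable bound independent of `k`, and each term tends to `0` by weak operator convergence;
dominated convergence for series finishes the proof.
-/

open MeasureTheory Filter Topology
open scoped InnerProductSpace

theorem Summable.mul_of_summable_sq {ι : Type*} {a b : ι → ℝ}
    (ha : Summable fun i => a i ^ 2) (hb : Summable fun i => b i ^ 2) :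
    Summable fun i => a i * b i := by
  refine ((ha.add hb).div_const 2).of_norm_bounded fun i => ?_
  rw [Real.norm_eq_abs, abs_mul, le_div_iff₀ two_pos]
  nlinarith [two_mul_le_add_sq |a i| |b i|, sq_abs (a i), sq_abs (b i)]

theorem tendsto_tsum_inner_of_tendsto_inner_zero {𝕜 E ι α : Type*} [RCLike 𝕜]
    [NormedAddCommGroup E] [InnerProductSpace 𝕜 E] {l : Filter α} {T : α → E →L[𝕜] E} {B : ℝ}
    (hB : ∀ k, ‖T k‖ ≤ B) (hT : ∀ x y, Tendsto (fun k => ⟪T k x, y⟫_𝕜) l (𝓝 0))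
    {u v : ι → E} (hu : Summable fun i => ‖u i‖ ^ 2) (hv : Summable fun i => ‖v i‖ ^ 2) :
    Tendsto (fun k => ∑' i, ⟪T k (u i), v i⟫_𝕜) l (𝓝 0) := by
  have h_dom : ∀ k i, ‖⟪T k (u i), v i⟫_𝕜‖ ≤ B * (‖u i‖ * ‖v i‖) := fun k i =>
    calc ‖⟪T k (u i), v i⟫_𝕜‖
        ≤ ‖T k (u i)‖ * ‖v i‖ := norm_inner_le_norm _ _
      _ ≤ ‖T k‖ * ‖u i‖ * ‖v i‖ := by gcongr; exact (T k).le_opNorm _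
      _ ≤ B * (‖u i‖ * ‖v i‖) := by rw [mul_assoc]; gcongr; exact hB k
  simpa using tendsto_tsum_of_dominated_convergence ((hu.mul_of_summable_sq hv).mul_left B)
    (fun i => hT (u i) (v i)) (Eventually.of_forall h_dom)

theorem MeasureTheory.L2.norm_sq_eq_integral {𝕜 E Ω : Type*} [RCLike 𝕜] [NormedAddCommGroup E]
    [InnerProductSpace 𝕜 E] [MeasurableSpace Ω] {μ : Measure Ω} (f : Lp E 2 μ) :
    ‖f‖ ^ 2 = ∫ x, ‖f x‖ ^ 2 ∂μ := by
  rw [@norm_sq_eq_re_inner 𝕜, L2.inner_def, ← integral_re (L2.integrable_inner f f)]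
  simp only [inner_self_eq_norm_sq]

theorem MeasureTheory.MemLp.norm_toLp_sq_eq_integral {𝕜 Ω : Type*} [RCLike 𝕜] [MeasurableSpace Ω]
    {μ : Measure Ω} {f : Ω → 𝕜} (hf : MemLp f 2 μ) :
    ‖hf.toLp f‖ ^ 2 = ∫ x, ‖f x‖ ^ 2 ∂μ := by
  rw [L2.norm_sq_eq_integral (𝕜 := 𝕜)]
  refine integral_congr_ae ?_
  filter_upwards [hf.coeFn_toLp] with x hx
  rw [hx]

theorem summable_norm_toLp_mul_sq {𝕜 Ω ι : Type*} [RCLike 𝕜] [MeasurableSpace Ω]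
    {μ : Measure Ω} {C : ℝ} {ψ : ι → Ω → 𝕜}
    (hψ : ∀ᵐ x ∂μ, (Summable fun i => ‖ψ i x‖ ^ 2) ∧ (∑' i, ‖ψ i x‖ ^ 2) ≤ C)
    (f : Lp 𝕜 2 μ) (hψf : ∀ i, MemLp (fun x => ψ i x * f x) 2 μ) :
    Summable fun i => ‖(hψf i).toLp _‖ ^ 2 := by
  have hf : Integrable (fun x => ‖f x‖ ^ 2) μ :=
    (memLp_two_iff_integrable_sq_norm (Lp.aestronglyMeasurable f)).1 (Lp.memLp f)
  have hψf_int : ∀ i, Integrable (fun x => ‖ψ i x * f x‖ ^ 2) μ := fun i =>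
    (memLp_two_iff_integrable_sq_norm (hψf i).1).1 (hψf i)
  refine summable_of_sum_le (c := C * ∫ x, ‖f x‖ ^ 2 ∂μ) (fun i => sq_nonneg _) fun s => ?_
  simp only [MemLp.norm_toLp_sq_eq_integral]
  rw [← integral_finsetSum _ fun i _ => hψf_int i, ← integral_const_mul]
  refine integral_mono_ae (integrable_finsetSum _ fun i _ => hψf_int i) (hf.const_mul C) ?_
  filter_upwards [hψ] with x ⟨hsum, hle⟩
  calc ∑ i ∈ s, ‖ψ i x * f x‖ ^ 2
      = (∑ i ∈ s, ‖ψ i x‖ ^ 2) * ‖f x‖ ^ 2 := by simp only [norm_mul, mul_pow, Finset.sum_mul]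
    _ ≤ C * ‖f x‖ ^ 2 := by
      gcongr
      exact (hsum.sum_le_tsum s fun i _ => sq_nonneg _).trans hle

theorem stmt3_general {Ω : Type*} [MeasurableSpace Ω] (μ : Measure Ω)
    (C : ℝ) (φ ψ : ℕ → Ω → ℂ)
    (hφ : ∀ᵐ x ∂μ, (Summable fun i => ‖φ i x‖ ^ 2) ∧ (∑' i, ‖φ i x‖ ^ 2) ≤ C)
    (hψ : ∀ᵐ x ∂μ, (Summable fun i => ‖ψ i x‖ ^ 2) ∧ (∑' i, ‖ψ i x‖ ^ 2) ≤ C)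
    (S : ℕ → (Lp ℂ 2 μ →L[ℂ] Lp ℂ 2 μ))
    (hSbdd : ∃ B : ℝ, ∀ k, ‖S k‖ ≤ B)
    (hSwot : ∀ h h' : Lp ℂ 2 μ,
      Tendsto (fun k => (@inner ℂ _ _ (S k h) h' : ℂ)) atTop (nhds 0))
    (f g : Lp ℂ 2 μ)
    (hψf : ∀ i, MemLp (fun x => ψ i x * f x) 2 μ)
    (hφg : ∀ i, MemLp (fun x => (starRingEnd ℂ) (φ i x) * g x) 2 μ) :
    Tendsto
      (fun k => ∑' i, (@inner ℂ _ _ (S k ((hψf i).toLp _)) ((hφg i).toLp _) : ℂ))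
      atTop (nhds 0) := by
  obtain ⟨B, hB⟩ := hSbdd
  have hφ_conj : ∀ᵐ x ∂μ, (Summable fun i => ‖(starRingEnd ℂ) (φ i x)‖ ^ 2) ∧
      (∑' i, ‖(starRingEnd ℂ) (φ i x)‖ ^ 2) ≤ C := by
    simpa only [RCLike.norm_conj] using hφ
  exact tendsto_tsum_inner_of_tendsto_inner_zero hB hSwot
    (summable_norm_toLp_mul_sq hψ f hψf) (summable_norm_toLp_mul_sq hφ_conj g hφg)

/-- If `Σ_i |φ_i(x)|² ≤ C` and `Σ_i |ψ_i(x)|² ≤ C` a.e., and `(S_k)` is a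
uniformly bounded sequence of operators on `L²(Ω,μ)` converging to `0` in the weak
operator topology, then for all `f, g ∈ L²(Ω,μ)`,
`Σ_i ⟪S_k(ψ_i·f), φ̄_i·g⟫ → 0` as `k → ∞`. -/
theorem stmt3 {Ω : Type*} [MeasurableSpace Ω] (μ : Measure Ω)
    (C : ℝ) (hC : 0 < C) (φ ψ : ℕ → Ω → ℂ)
    (hφm : ∀ i, Measurable (φ i)) (hψm : ∀ i, Measurable (ψ i))
    (hφ : ∀ᵐ x ∂μ, (Summable fun i => ‖φ i x‖ ^ 2) ∧ (∑' i, ‖φ i x‖ ^ 2) ≤ C)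
    (hψ : ∀ᵐ x ∂μ, (Summable fun i => ‖ψ i x‖ ^ 2) ∧ (∑' i, ‖ψ i x‖ ^ 2) ≤ C)
    (S : ℕ → (Lp ℂ 2 μ →L[ℂ] Lp ℂ 2 μ))
    (hSbdd : ∃ B : ℝ, ∀ k, ‖S k‖ ≤ B)
    (hSwot : ∀ h h' : Lp ℂ 2 μ,
      Tendsto (fun k => (@inner ℂ _ _ (S k h) h' : ℂ)) atTop (nhds 0))
    (f g : Lp ℂ 2 μ)
    (hψf : ∀ i, MemLp (fun x => ψ i x * f x) 2 μ)
    (hφg : ∀ i, MemLp (fun x => (starRingEnd ℂ) (φ i x) * g x) 2 μ) :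
    Tendsto
      (fun k => ∑' i, (@inner ℂ _ _ (S k ((hψf i).toLp _)) ((hφg i).toLp _) : ℂ))
      atTop (nhds 0) :=
  stmt3_general μ C φ ψ hφ hψ S hSbdd hSwot f g hψf hφg
end
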